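/- arXiv:2109.05254 — 5 statements merged into one kernel-verified Lean document; each statement's English description precedes it below -/
import Mathlib

section
/- Let I ⊆ ℝ be an open interval, u : I → ℝ a C² function with 1 − u'(s)² > 0 for all s ∈ I, and v = (v₁,v₂,v₃) ∈ ℝ³. Define X(s,t) = (t, s, u(s)) (a cylindrical surface with rulings parallel to the spacelike vector (1,0,0)). Then X satisfies the translating soliton equation with respect to v at every point of I × ℝ if and only if u''(s) = (1 − u'(s)²)(v₂ u'(s) − v₃) for all s ∈ I. -/
noncomputable section

/-- The Lorentzian (Minkowski) inner product on ℝ³: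
`⟨a,b⟩ = a₁b₁ + a₂b₂ − a₃b₃`. -/
def mink (a b : Fin 3 → ℝ) : ℝ := a 0 * b 0 + a 1 * b 1 - a 2 * b 2

/-- Determinant of the 3×3 matrix with rows `a`, `b`, `c`. -/
def det3 (a b c : Fin 3 → ℝ) : ℝ :=
  a 0 * (b 1 * c 2 - b 2 * c 1) - a 1 * (b 0 * c 2 - b 2 * c 0)
    + a 2 * (b 0 * c 1 - b 1 * c 0)

/-- Partial derivative `X_s` of a parametrized surface `X(s,t)`. -/
def pS (X : ℝ → ℝ → Fin 3 → ℝ) (s t : ℝ) : Fin 3 → ℝ := deriv (fun a => X a t) s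

/-- Partial derivative `X_t`. -/
def pT (X : ℝ → ℝ → Fin 3 → ℝ) (s t : ℝ) : Fin 3 → ℝ := deriv (fun b => X s b) t

/-- Second partial derivative `X_ss`. -/
def pSS (X : ℝ → ℝ → Fin 3 → ℝ) (s t : ℝ) : Fin 3 → ℝ := deriv (fun a => pS X a t) s

/-- Mixed second partial derivative `X_st`. -/
def pST (X : ℝ → ℝ → Fin 3 → ℝ) (s t : ℝ) : Fin 3 → ℝ := deriv (fun a => pT X a t) s

/-- Second partial derivative `X_tt`. -/
def pTT (X : ℝ → ℝ → Fin 3 → ℝ) (s t : ℝ) : Fin 3 → ℝ := deriv (fun b => pT X s b) t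

/-- Coefficient `E = ⟨X_s, X_s⟩` of the first fundamental form. -/
def coefE (X : ℝ → ℝ → Fin 3 → ℝ) (s t : ℝ) : ℝ := mink (pS X s t) (pS X s t)

/-- Coefficient `F = ⟨X_s, X_t⟩` of the first fundamental form. -/
def coefF (X : ℝ → ℝ → Fin 3 → ℝ) (s t : ℝ) : ℝ := mink (pS X s t) (pT X s t)

/-- Coefficient `G = ⟨X_t, X_t⟩` of the first fundamental form. -/
def coefG (X : ℝ → ℝ → Fin 3 → ℝ) (s t : ℝ) : ℝ := mink (pT X s t) (pT X s t)

/-- `EG − F²` at `(s,t)`. -/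
def disc (X : ℝ → ℝ → Fin 3 → ℝ) (s t : ℝ) : ℝ :=
  coefE X s t * coefG X s t - coefF X s t ^ 2

/-- The translating soliton equation with respect to the velocity `v` at the point `(s,t)`:
`E·det(X_s,X_t,X_tt) − 2F·det(X_s,X_t,X_st) + G·det(X_s,X_t,X_ss)
  = −|EG − F²|·det(X_s,X_t,v)`. -/
def SolitonEqAt (X : ℝ → ℝ → Fin 3 → ℝ) (v : Fin 3 → ℝ) (s t : ℝ) : Prop :=
  coefE X s t * det3 (pS X s t) (pT X s t) (pTT X s t)
    - 2 * coefF X s t * det3 (pS X s t) (pT X s t) (pST X s t)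
    + coefG X s t * det3 (pS X s t) (pT X s t) (pSS X s t)
  = -|disc X s t| * det3 (pS X s t) (pT X s t) v

open Filter Topology

lemma hasDerivAt_vecCons₃ {𝕜 E : Type*} [NontriviallyNormedField 𝕜] [NormedAddCommGroup E]
    [NormedSpace 𝕜 E] {f g h : 𝕜 → E} {f' g' h' : E} {x : 𝕜}
    (hf : HasDerivAt f f' x) (hg : HasDerivAt g g' x) (hh : HasDerivAt h h' x) :
    HasDerivAt (fun a => ![f a, g a, h a]) ![f', g', h'] x := by
  rw [hasDerivAt_pi]
  intro i
  fin_cases i <;> assumption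

def cylinder (u : ℝ → ℝ) : ℝ → ℝ → Fin 3 → ℝ := fun s t => ![t, s, u s]

section Cylinder

variable {u : ℝ → ℝ}

lemma pS_cylinder {s : ℝ} (hu : DifferentiableAt ℝ u s) (t : ℝ) :
    pS (cylinder u) s t = ![0, 1, deriv u s] :=
  (hasDerivAt_vecCons₃ (hasDerivAt_const s t) (hasDerivAt_id s) hu.hasDerivAt).deriv

lemma pT_cylinder (s t : ℝ) : pT (cylinder u) s t = ![1, 0, 0] :=
  (hasDerivAt_vecCons₃ (hasDerivAt_id t) (hasDerivAt_const t s)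
    (hasDerivAt_const t (u s))).deriv

lemma pTT_cylinder (s t : ℝ) : pTT (cylinder u) s t = 0 := by
  simp only [pTT, pT_cylinder, deriv_const]

lemma pST_cylinder (s t : ℝ) : pST (cylinder u) s t = 0 := by
  simp only [pST, pT_cylinder, deriv_const]

lemma pSS_cylinder {s : ℝ} (hu : ∀ᶠ a in 𝓝 s, DifferentiableAt ℝ u a)
    (hu' : DifferentiableAt ℝ (deriv u) s) (t : ℝ) :
    pSS (cylinder u) s t = ![0, 0, deriv (deriv u) s] := by
  have hpS : (fun a => pS (cylinder u) a t) =ᶠ[𝓝 s] fun a => ![0, 1, deriv u a] :=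
    hu.mono fun a ha => pS_cylinder ha t
  rw [pSS, hpS.deriv_eq]
  exact (hasDerivAt_vecCons₃ (hasDerivAt_const s 0) (hasDerivAt_const s 1)
    hu'.hasDerivAt).deriv

/-- With `X_s = (0,1,u')` and `X_t = (1,0,0)` one has `E = 1 - u'²`, `F = 0`, `G = 1`, and the
soliton equation reduces to `-u'' = -(1 - u'²)(v₂u' - v₃)`. -/
theorem solitonEqAt_cylinder_iff {s : ℝ} (hu : ∀ᶠ a in 𝓝 s, DifferentiableAt ℝ u a)
    (hu' : DifferentiableAt ℝ (deriv u) s) (hsp : 0 < 1 - deriv u s ^ 2)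
    (v₁ v₂ v₃ t : ℝ) :
    SolitonEqAt (cylinder u) ![v₁, v₂, v₃] s t ↔
      deriv (deriv u) s = (1 - deriv u s ^ 2) * (v₂ * deriv u s - v₃) := by
  have hdisc : disc (cylinder u) s t = 1 - deriv u s ^ 2 := by
    simp only [disc, coefE, coefF, coefG, pS_cylinder hu.self_of_nhds, pT_cylinder, mink,
      Matrix.cons_val_zero, Matrix.cons_val_one, Matrix.cons_val_two, Matrix.head_cons,
      Matrix.tail_cons]
    ring
  rw [SolitonEqAt, hdisc, abs_of_pos hsp, coefE, coefF, coefG, pS_cylinder hu.self_of_nhds,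
    pT_cylinder, pTT_cylinder, pST_cylinder, pSS_cylinder hu hu']
  simp only [mink, det3, Pi.zero_apply, Matrix.cons_val_zero, Matrix.cons_val_one,
    Matrix.cons_val_two, Matrix.head_cons, Matrix.tail_cons]
  constructor <;> intro h <;> linarith

end Cylinder

theorem stmt0_general (I : Set ℝ) (hIopen : IsOpen I)
    (u : ℝ → ℝ) (hu : ContDiffOn ℝ 2 u I)
    (hsp : ∀ s ∈ I, 1 - (deriv u s) ^ 2 > 0)
    (v₁ v₂ v₃ : ℝ) :
    (∀ s ∈ I, ∀ t : ℝ,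
        SolitonEqAt (fun s t => ![t, s, u s]) ![v₁, v₂, v₃] s t) ↔
      (∀ s ∈ I,
        deriv (deriv u) s = (1 - (deriv u s) ^ 2) * (v₂ * deriv u s - v₃)) := by
  have hdiff : ∀ a ∈ I, DifferentiableAt ℝ u a := fun a ha =>
    (hu.differentiableOn two_ne_zero).differentiableAt (hIopen.mem_nhds ha)
  have hdiff' : ∀ a ∈ I, DifferentiableAt ℝ (deriv u) a := fun a ha =>
    ((hu.deriv_of_isOpen hIopen le_rfl).differentiableOn one_ne_zero).differentiableAt
      (hIopen.mem_nhds ha)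
  refine forall₂_congr fun s hs => ?_
  have hu_near : ∀ᶠ a in 𝓝 s, DifferentiableAt ℝ u a :=
    eventually_of_mem (hIopen.mem_nhds hs) hdiff
  exact (forall_congr' fun t => solitonEqAt_cylinder_iff hu_near (hdiff' s hs) (hsp s hs)
    v₁ v₂ v₃ t).trans (forall_const ℝ)

/-- For the cylindrical surface `X(s,t) = (t, s, u(s))` with spacelike rulings
`(1,0,0)` over an open interval `I`, with `1 − u'² > 0` on `I`, the translating soliton
equation w.r.t. `v = (v₁,v₂,v₃)` holds on `I × ℝ` iff
`u'' = (1 − u'²)(v₂u' − v₃)` on `I`. -/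
theorem stmt0 (I : Set ℝ) (hIopen : IsOpen I) (hIconn : I.OrdConnected)
    (u : ℝ → ℝ) (hu : ContDiffOn ℝ 2 u I)
    (hsp : ∀ s ∈ I, 1 - (deriv u s) ^ 2 > 0)
    (v₁ v₂ v₃ : ℝ) :
    (∀ s ∈ I, ∀ t : ℝ,
        SolitonEqAt (fun s t => ![t, s, u s]) ![v₁, v₂, v₃] s t) ↔
      (∀ s ∈ I,
        deriv (deriv u) s = (1 - (deriv u s) ^ 2) * (v₂ * deriv u s - v₃)) :=
  stmt0_general I hIopen u hu hsp v₁ v₂ v₃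
end
end

section
/- Let I ⊆ ℝ be an open interval, u : I → ℝ a C² function with 1 − u'(s)² < 0 for all s ∈ I, and v = (v₁,v₂,v₃) ∈ ℝ³. Define X(s,t) = (t, s, u(s)). Then X satisfies the translating soliton equation with respect to v at every point of I × ℝ if and only if u''(s) = (u'(s)² − 1)(v₂ u'(s) − v₃) for all s ∈ I. -/
/-!
For `X(s,t) = (t, s, u(s))` one has `X_s = (0, 1, u')`, `X_t = (1, 0, 0)`, `X_ss = (0, 0, u'')` and
`X_st = X_tt = 0`, so `E = 1 - u'²`, `F = 0`, `G = 1`, and the soliton equation collapses to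
`u'' = |1 - u'²| (v₂ u' - v₃)`, independently of `t`. Where `1 - u'² < 0` the absolute value is
`u'² - 1`.
-/

noncomputable section

open Topology

def graphCylinder (u : ℝ → ℝ) (s t : ℝ) : Fin 3 → ℝ := ![t, s, u s]

lemma HasDerivAt.vec3 {f₀ f₁ f₂ : ℝ → ℝ} {a₀ a₁ a₂ s : ℝ} (h₀ : HasDerivAt f₀ a₀ s)
    (h₁ : HasDerivAt f₁ a₁ s) (h₂ : HasDerivAt f₂ a₂ s) :
    HasDerivAt (fun x => ![f₀ x, f₁ x, f₂ x]) ![a₀, a₁, a₂] s :=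
  h₀.finCons <| h₁.finCons <| h₂.finCons <|
    (hasDerivAt_const s ![]).congr_deriv (Subsingleton.elim _ _)

namespace graphCylinder

variable {u : ℝ → ℝ} {s : ℝ}

lemma pS_eq (hu : DifferentiableAt ℝ u s) (t : ℝ) :
    pS (graphCylinder u) s t = ![0, 1, deriv u s] :=
  ((hasDerivAt_const s t).vec3 (hasDerivAt_id s) hu.hasDerivAt).deriv

lemma pT_eq (u : ℝ → ℝ) (s t : ℝ) : pT (graphCylinder u) s t = ![1, 0, 0] :=
  ((hasDerivAt_id t).vec3 (hasDerivAt_const t s) (hasDerivAt_const t (u s))).deriv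

lemma pST_eq (u : ℝ → ℝ) (s t : ℝ) : pST (graphCylinder u) s t = 0 := by
  simp only [pST, pT_eq, deriv_const]

lemma pTT_eq (u : ℝ → ℝ) (s t : ℝ) : pTT (graphCylinder u) s t = 0 := by
  simp only [pTT, pT_eq, deriv_const]

lemma pSS_eq (hu : ∀ᶠ a in 𝓝 s, DifferentiableAt ℝ u a)
    (hu' : DifferentiableAt ℝ (deriv u) s) (t : ℝ) :
    pSS (graphCylinder u) s t = ![0, 0, deriv (deriv u) s] := by
  have hpS : (fun a => pS (graphCylinder u) a t) =ᶠ[𝓝 s] fun a => ![0, 1, deriv u a] :=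
    hu.mono fun a ha => pS_eq ha t
  rw [pSS, hpS.deriv_eq]
  exact ((hasDerivAt_const s 0).vec3 (hasDerivAt_const s 1) hu'.hasDerivAt).deriv

lemma disc_eq (hu : DifferentiableAt ℝ u s) (t : ℝ) :
    disc (graphCylinder u) s t = 1 - deriv u s ^ 2 := by
  simp only [disc, coefE, coefF, coefG, mink, pS_eq hu, pT_eq, Matrix.cons_val_zero,
    Matrix.cons_val_one, Matrix.cons_val_two,
    Matrix.tail_cons, Matrix.head_cons]
  ring

theorem solitonEqAt_iff (hu : ∀ᶠ a in 𝓝 s, DifferentiableAt ℝ u a)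
    (hu' : DifferentiableAt ℝ (deriv u) s) (v : Fin 3 → ℝ) (t : ℝ) :
    SolitonEqAt (graphCylinder u) v s t ↔
      deriv (deriv u) s = |1 - deriv u s ^ 2| * (v 1 * deriv u s - v 2) := by
  rw [SolitonEqAt, disc_eq hu.self_of_nhds]
  simp only [coefE, coefF, coefG, mink, det3, pS_eq hu.self_of_nhds, pT_eq, pST_eq, pTT_eq,
    pSS_eq hu hu', Matrix.cons_val_zero, Matrix.cons_val_one, Matrix.cons_val_two, Matrix.tail_cons,
    Matrix.head_cons, Pi.zero_apply]
  constructor <;> intro h <;> linarith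

end graphCylinder

theorem stmt1_general (I : Set ℝ) (hIopen : IsOpen I)
    (u : ℝ → ℝ) (hu : ContDiffOn ℝ 2 u I)
    (htl : ∀ s ∈ I, 1 - (deriv u s) ^ 2 < 0)
    (v₁ v₂ v₃ : ℝ) :
    (∀ s ∈ I, ∀ t : ℝ,
        SolitonEqAt (fun s t => ![t, s, u s]) ![v₁, v₂, v₃] s t) ↔
      (∀ s ∈ I,
        deriv (deriv u) s = ((deriv u s) ^ 2 - 1) * (v₂ * deriv u s - v₃)) := by
  have hdiff : DifferentiableOn ℝ u I := hu.differentiableOn (by norm_num)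
  have hdiff' : DifferentiableOn ℝ (deriv u) I :=
    (hu.deriv_of_isOpen (m := 1) hIopen (by norm_num)).differentiableOn (by norm_num)
  have key (s : ℝ) (hs : s ∈ I) (t : ℝ) : SolitonEqAt (graphCylinder u) ![v₁, v₂, v₃] s t ↔
      deriv (deriv u) s = ((deriv u s) ^ 2 - 1) * (v₂ * deriv u s - v₃) := by
    have hdiff_near : ∀ᶠ a in 𝓝 s, DifferentiableAt ℝ u a :=
      hIopen.eventually_mem hs |>.mono fun a ha => hdiff.differentiableAt (hIopen.mem_nhds ha)
    rw [graphCylinder.solitonEqAt_iff hdiff_near (hdiff'.differentiableAt (hIopen.mem_nhds hs)),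
      abs_of_neg (htl s hs), neg_sub]
    rfl
  exact ⟨fun h s hs => (key s hs 0).mp (h s hs 0), fun h s hs t => (key s hs t).mpr (h s hs)⟩

/-- For the cylindrical surface `X(s,t) = (t, s, u(s))` over an open interval `I`,
with `1 − u'² < 0` on `I`, the translating soliton equation w.r.t. `v = (v₁,v₂,v₃)` holds on
`I × ℝ` iff `u'' = (u'² − 1)(v₂u' − v₃)` on `I`. -/
theorem stmt1 (I : Set ℝ) (hIopen : IsOpen I) (hIconn : I.OrdConnected)
    (u : ℝ → ℝ) (hu : ContDiffOn ℝ 2 u I)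
    (htl : ∀ s ∈ I, 1 - (deriv u s) ^ 2 < 0)
    (v₁ v₂ v₃ : ℝ) :
    (∀ s ∈ I, ∀ t : ℝ,
        SolitonEqAt (fun s t => ![t, s, u s]) ![v₁, v₂, v₃] s t) ↔
      (∀ s ∈ I,
        deriv (deriv u) s = ((deriv u s) ^ 2 - 1) * (v₂ * deriv u s - v₃)) :=
  stmt1_general I hIopen u hu htl v₁ v₂ v₃
end
end

section
/- Let I ⊆ ℝ be an open interval, γ : I → ℝ³ a C² curve with ⟨γ'(s),(1,0,1)⟩ ≠ 0 for all s ∈ I, and λ ∈ ℝ. Then the cylindrical surface X(s,t) = γ(s) + t(1,0,1), whose rulings are parallel to the lightlike vector (1,0,1), is non-degenerate at every point of I × ℝ (indeed EG − F² = −⟨γ'(s),(1,0,1)⟩² < 0) and satisfies the translating soliton equation with respect to v = λ(1,0,1) at every point of I × ℝ. That is, when the velocity v is lightlike, any cylindrical surface whose rulings are parallel to v is a translating soliton, with arbitrary base curve. -/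
noncomputable section

/-! Along `X(s,t) = γ(s) + t w` one has `X_s = γ'`, `X_t = w` and `X_st = X_tt = 0`, so
`F = ⟨γ',w⟩` and `G = ⟨w,w⟩`. For lightlike `w`, `G = 0` gives `EG − F² = −⟨γ',w⟩²`, and each term
of the soliton equation for `v = λw` vanishes: `X_tt` and `X_st` are zero, `G` kills the `X_ss`
term, and `X_t ∥ v` kills the right-hand side. -/

lemma det3_zero_right (a b : Fin 3 → ℝ) : det3 a b 0 = 0 := by
  simp [det3]

lemma det3_smul_middle_right (a b : Fin 3 → ℝ) (l : ℝ) : det3 a b (l • b) = 0 := by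
  simp only [det3, Pi.smul_apply, smul_eq_mul]
  ring

section Cylinder

variable (γ : ℝ → Fin 3 → ℝ) (w : Fin 3 → ℝ) (s t : ℝ)

lemma pS_cylinder_s4 : pS (fun s t => γ s + t • w) s t = deriv γ s :=
  deriv_add_const _

lemma pT_cylinder_s4 : pT (fun s t => γ s + t • w) s t = w := by
  simpa only [pT, id, one_smul] using (((hasDerivAt_id t).smul_const w).const_add (γ s)).deriv

lemma pST_cylinder_s4 : pST (fun s t => γ s + t • w) s t = 0 := by
  simp only [pST, pT_cylinder_s4, deriv_const]

lemma pTT_cylinder_s4 : pTT (fun s t => γ s + t • w) s t = 0 := by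
  simp only [pTT, pT_cylinder_s4, deriv_const]

lemma coefF_cylinder : coefF (fun s t => γ s + t • w) s t = mink (deriv γ s) w := by
  rw [coefF, pS_cylinder_s4, pT_cylinder_s4]

lemma coefG_cylinder : coefG (fun s t => γ s + t • w) s t = mink w w := by
  rw [coefG, pT_cylinder_s4]

variable {w}

lemma disc_cylinder_of_lightlike (hw : mink w w = 0) :
    disc (fun s t => γ s + t • w) s t = -(mink (deriv γ s) w) ^ 2 := by
  rw [disc, coefF_cylinder, coefG_cylinder, hw, mul_zero, zero_sub]

lemma solitonEqAt_cylinder_of_lightlike (hw : mink w w = 0) (l : ℝ) :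
    SolitonEqAt (fun s t => γ s + t • w) (l • w) s t := by
  rw [SolitonEqAt, pTT_cylinder_s4, pST_cylinder_s4, coefG_cylinder, hw, pT_cylinder_s4,
    det3_zero_right, det3_smul_middle_right]
  ring

end Cylinder

theorem stmt4_general (I : Set ℝ)
    (γ : ℝ → Fin 3 → ℝ)
    (hne : ∀ s ∈ I, mink (deriv γ s) ![1, 0, 1] ≠ 0)
    (l : ℝ) :
    ∀ s ∈ I, ∀ t : ℝ,
      disc (fun s t => γ s + t • ![1, 0, 1]) s t
          = -(mink (deriv γ s) ![1, 0, 1]) ^ 2 ∧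
      disc (fun s t => γ s + t • ![1, 0, 1]) s t < 0 ∧
      SolitonEqAt (fun s t => γ s + t • ![1, 0, 1]) (l • ![1, 0, 1]) s t := by
  intro s hs t
  have hlight : mink ![1, 0, 1] ![1, 0, 1] = 0 := by simp [mink]
  have hdisc := disc_cylinder_of_lightlike γ s t hlight
  refine ⟨hdisc, ?_, solitonEqAt_cylinder_of_lightlike γ s t hlight l⟩
  rw [hdisc]
  exact neg_neg_of_pos (sq_pos_of_ne_zero (hne s hs))

/-- For a C² base curve `γ` on an open interval `I` with
`⟨γ'(s),(1,0,1)⟩ ≠ 0`, the cylindrical surface `X(s,t) = γ(s) + t(1,0,1)` with lightlike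
rulings `(1,0,1)` is non-degenerate, with `EG − F² = −⟨γ',(1,0,1)⟩² < 0`, and is a
translating soliton with respect to any lightlike velocity `v = λ(1,0,1)`. -/
theorem stmt4 (I : Set ℝ) (hIopen : IsOpen I) (hIconn : I.OrdConnected)
    (γ : ℝ → Fin 3 → ℝ) (hγ : ContDiffOn ℝ 2 γ I)
    (hne : ∀ s ∈ I, mink (deriv γ s) ![1, 0, 1] ≠ 0)
    (l : ℝ) :
    ∀ s ∈ I, ∀ t : ℝ,
      disc (fun s t => γ s + t • ![1, 0, 1]) s t
          = -(mink (deriv γ s) ![1, 0, 1]) ^ 2 ∧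
      disc (fun s t => γ s + t • ![1, 0, 1]) s t < 0 ∧
      SolitonEqAt (fun s t => γ s + t • ![1, 0, 1]) (l • ![1, 0, 1]) s t :=
  stmt4_general I γ hne l
end
end

section
/- (Theorem 2, normalized form: a non-cylindrical ruled translating soliton with lightlike rulings cannot exist.) Let I ⊆ ℝ be an open interval and γ, w : I → ℝ³ be C² maps such that for all s ∈ I: ⟨w(s),w(s)⟩ = 0, ⟨w'(s),w'(s)⟩ = 1, ⟨γ'(s),w(s)⟩ ≠ 0 and ⟨γ'(s),w'(s)⟩ = 0 (here ⟨,⟩ is the Lorentzian inner product). Then for every vector v ∈ ℝ³ and every nonempty open interval J ⊆ ℝ, the ruled surface X(s,t) = γ(s) + t·w(s) does not satisfy the translating soliton equation with respect to v at every point of I × J. -/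
/-!
Along `X = γ + t w` with `⟨w,w⟩ = 0` we have `G = 0` and `F = ⟨γ',w⟩` independent of `t`, so the
soliton equation reads `2 det(γ',w,w') = F det(γ',w,v) + t F det(w',w,v)`. Being affine in `t` on
an open interval, it splits into `det(w',w,v) = 0` and `2 det(γ',w,w') = F det(γ',w,v)`.
The Lorentzian Cauchy–Binet identity turns determinants into inner products: for the null frame
`(w, w')` it gives `det(x,w,w')² = ⟨x,w⟩²`, so the first equation says `⟨w,v⟩ = 0` on `I`, and
differentiating gives `⟨w',v⟩ = 0`. Then `w'` is orthogonal to `γ'`, `w` and `v`, which forces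
`det(γ',w,v) = 0`, whereas `det(γ',w,w')² = F² ≠ 0`.
-/

noncomputable section

theorem mink_comm (a b : Fin 3 → ℝ) : mink a b = mink b a := by
  simp only [mink]; ring

theorem det3_swap13 (a b c : Fin 3 → ℝ) : det3 c b a = -det3 a b c := by
  simp only [det3]; ring

/-- With `M`, `N` the matrices of rows `a, b, c` and `x, y, z`, the matrix on the right is
`M η Nᵀ` for `η = diag(1,1,-1)`, and `det η = -1`. -/
theorem det3_mul_det3 (a b c x y z : Fin 3 → ℝ) :
    det3 a b c * det3 x y z = -Matrix.det !![mink a x, mink a y, mink a z;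
      mink b x, mink b y, mink b z; mink c x, mink c y, mink c z] := by
  simp only [Matrix.det_fin_three, Matrix.of_apply, Matrix.cons_val', Matrix.cons_val_zero,
    Matrix.cons_val_fin_one, Matrix.cons_val_one, Matrix.cons_val, det3, mink]
  ring

theorem det3_sq_eq_mink_sq {w a : Fin 3 → ℝ} (hww : mink w w = 0) (hwa : mink w a = 0)
    (haa : mink a a = 1) (x : Fin 3 → ℝ) : det3 x w a ^ 2 = mink x w ^ 2 := by
  rw [sq, det3_mul_det3, Matrix.det_fin_three]
  simp only [Matrix.of_apply, Matrix.cons_val', Matrix.cons_val_zero, Matrix.cons_val_fin_one,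
    Matrix.cons_val_one, Matrix.cons_val]
  rw [mink_comm w x, mink_comm a x, mink_comm a w, hww, hwa, haa]
  ring

theorem mink_eq_zero_of_det3_eq_zero {w a x : Fin 3 → ℝ} (hww : mink w w = 0)
    (hwa : mink w a = 0) (haa : mink a a = 1) (h : det3 x w a = 0) : mink x w = 0 := by
  rw [← sq_eq_zero_iff, ← det3_sq_eq_mink_sq hww hwa haa, h, sq, zero_mul]

theorem det3_mul_det3_eq_zero_of_orthogonal {a x y z : Fin 3 → ℝ} (hx : mink x a = 0)
    (hy : mink y a = 0) (hz : mink z a = 0) (b c : Fin 3 → ℝ) : det3 x y z * det3 b c a = 0 := by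
  rw [det3_mul_det3, Matrix.det_fin_three]
  simp only [Matrix.of_apply, Matrix.cons_val', Matrix.cons_val_zero, Matrix.cons_val_fin_one,
    Matrix.cons_val_one, Matrix.cons_val]
  rw [hx, hy, hz]
  ring

theorem two_mul_det3_ne_mink_mul_det3 {g w a v : Fin 3 → ℝ} (hww : mink w w = 0)
    (hwa : mink w a = 0) (haa : mink a a = 1) (hgw : mink g w ≠ 0) (hga : mink g a = 0)
    (hav : mink a v = 0) : 2 * det3 g w a ≠ mink g w * det3 g w v := by
  have hD : det3 g w a ≠ 0 := by
    rw [← pow_ne_zero_iff two_ne_zero, det3_sq_eq_mink_sq hww hwa haa]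
    exact pow_ne_zero 2 hgw
  have hv : det3 g w v = 0 := by
    have := det3_mul_det3_eq_zero_of_orthogonal (z := v) hga hwa (by rwa [mink_comm]) g w
    exact (mul_eq_zero.1 this).resolve_right hD
  rw [hv, mul_zero]
  exact mul_ne_zero two_ne_zero hD

theorem HasDerivAt.mink {f g : ℝ → Fin 3 → ℝ} {f' g' : Fin 3 → ℝ} {x : ℝ}
    (hf : HasDerivAt f f' x) (hg : HasDerivAt g g' x) :
    HasDerivAt (fun y => mink (f y) (g y)) (mink f' (g x) + mink (f x) g') x := by
  have hfi := hasDerivAt_pi.1 hf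
  have hgi := hasDerivAt_pi.1 hg
  exact ((((hfi 0).mul (hgi 0)).add ((hfi 1).mul (hgi 1))).sub ((hfi 2).mul (hgi 2))).congr_deriv
    (by simp only [_root_.mink]; ring)

theorem HasDerivAt.eq_zero_of_eqOn_zero {φ : ℝ → ℝ} {φ' s : ℝ} {U : Set ℝ} (hU : IsOpen U)
    (hs : s ∈ U) (hφU : Set.EqOn φ 0 U) (hφ : HasDerivAt φ φ' s) : φ' = 0 :=
  hφ.unique ((hasDerivAt_const s 0).congr_of_eventuallyEq
    (Filter.eventuallyEq_of_mem (hU.mem_nhds hs) hφU))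

section

variable {w : ℝ → Fin 3 → ℝ} {U : Set ℝ} {s : ℝ}

theorem mink_deriv_eq_zero_of_null (hU : IsOpen U) (hs : s ∈ U) (hw : DifferentiableAt ℝ w s)
    (hww : ∀ x ∈ U, mink (w x) (w x) = 0) : mink (w s) (deriv w s) = 0 := by
  have h := hw.hasDerivAt.mink hw.hasDerivAt |>.eq_zero_of_eqOn_zero hU hs hww
  rw [mink_comm] at h
  linarith

theorem mink_deriv_eq_zero_of_orthogonal (hU : IsOpen U) (hs : s ∈ U)
    (hw : DifferentiableAt ℝ w s) {v : Fin 3 → ℝ} (hwv : ∀ x ∈ U, mink (w x) v = 0) :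
    mink (deriv w s) v = 0 := by
  have h := hw.hasDerivAt.mink (hasDerivAt_const s v) |>.eq_zero_of_eqOn_zero hU hs hwv
  simpa [_root_.mink] using h

end

theorem Set.Nontrivial.eq_zero_of_forall_eq_add_mul {J : Set ℝ} (hJ : J.Nontrivial)
    {a b c : ℝ} (h : ∀ t ∈ J, a = b + t * c) : c = 0 ∧ a = b := by
  obtain ⟨t₁, ht₁, t₂, ht₂, hne⟩ := hJ
  have hc : c = 0 := by
    have : (t₁ - t₂) * c = 0 := by linear_combination h t₂ ht₂ - h t₁ ht₁
    exact (mul_eq_zero.1 this).resolve_left (sub_ne_zero.2 hne)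
  refine ⟨hc, ?_⟩
  simpa [hc] using h t₁ ht₁

def ruledSurface (γ w : ℝ → Fin 3 → ℝ) (s t : ℝ) : Fin 3 → ℝ := γ s + t • w s

section

variable (γ w : ℝ → Fin 3 → ℝ) (s t : ℝ)

theorem pT_ruledSurface : pT (ruledSurface γ w) s t = w s := by
  show deriv (fun b => γ s + b • w s) t = w s
  simpa using (((hasDerivAt_id t).smul_const (w s)).const_add (γ s)).deriv

theorem pTT_ruledSurface : pTT (ruledSurface γ w) s t = 0 := by
  simp only [pTT, pT_ruledSurface, deriv_const']

theorem pST_ruledSurface : pST (ruledSurface γ w) s t = deriv w s := by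
  simp only [pST, pT_ruledSurface]

end

theorem pS_ruledSurface {γ w : ℝ → Fin 3 → ℝ} {s : ℝ} (hγ : DifferentiableAt ℝ γ s)
    (hw : DifferentiableAt ℝ w s) (t : ℝ) : pS (ruledSurface γ w) s t = deriv γ s + t • deriv w s :=
  (hγ.hasDerivAt.add (hw.hasDerivAt.const_smul t)).deriv

theorem solitonEqAt_ruledSurface_iff {γ w : ℝ → Fin 3 → ℝ} {s : ℝ}
    (hγ : DifferentiableAt ℝ γ s) (hw : DifferentiableAt ℝ w s)
    (hww : mink (w s) (w s) = 0) (hww' : mink (w s) (deriv w s) = 0)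
    (hγw : mink (deriv γ s) (w s) ≠ 0) (v : Fin 3 → ℝ) (t : ℝ) :
    SolitonEqAt (ruledSurface γ w) v s t ↔
      2 * det3 (deriv γ s) (w s) (deriv w s) =
        mink (deriv γ s) (w s) * det3 (deriv γ s) (w s) v
          + t * (mink (deriv γ s) (w s) * det3 (deriv w s) (w s) v) := by
  have hF : mink (deriv γ s + t • deriv w s) (w s) = mink (deriv γ s) (w s) := by
    rw [mink_comm] at hww'
    simp only [mink, Pi.add_apply, Pi.smul_apply, smul_eq_mul] at hww' ⊢
    linear_combination t * hww'
  have hXst :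
      det3 (deriv γ s + t • deriv w s) (w s) (deriv w s) = det3 (deriv γ s) (w s) (deriv w s) := by
    simp only [det3, Pi.add_apply, Pi.smul_apply, smul_eq_mul]; ring
  have hXv : det3 (deriv γ s + t • deriv w s) (w s) v =
      det3 (deriv γ s) (w s) v + t * det3 (deriv w s) (w s) v := by
    simp only [det3, Pi.add_apply, Pi.smul_apply, smul_eq_mul]; ring
  have hXtt : det3 (deriv γ s + t • deriv w s) (w s) 0 = 0 := by simp [det3]
  simp only [SolitonEqAt, disc, coefE, coefF, coefG, pS_ruledSurface hγ hw, pT_ruledSurface,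
    pTT_ruledSurface, pST_ruledSurface, hww, hF, hXst, hXv, hXtt, zero_mul, mul_zero, zero_sub,
    abs_neg, abs_sq]
  constructor
  · exact fun h => mul_left_cancel₀ hγw (by linear_combination -h)
  · exact fun h => by linear_combination -mink (deriv γ s) (w s) * h

theorem stmt10_general (I : Set ℝ) (hIopen : IsOpen I)
    (hIne : I.Nonempty)
    (γ w : ℝ → Fin 3 → ℝ)
    (hγ : ContDiffOn ℝ 2 γ I) (hw : ContDiffOn ℝ 2 w I)
    (hw0 : ∀ s ∈ I, mink (w s) (w s) = 0)
    (hw1 : ∀ s ∈ I, mink (deriv w s) (deriv w s) = 1)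
    (hγw : ∀ s ∈ I, mink (deriv γ s) (w s) ≠ 0)
    (hγw' : ∀ s ∈ I, mink (deriv γ s) (deriv w s) = 0)
    (v : Fin 3 → ℝ)
    (J : Set ℝ) (hJopen : IsOpen J) (hJne : J.Nonempty) :
    ¬ (∀ s ∈ I, ∀ t ∈ J, SolitonEqAt (fun s t => γ s + t • w s) v s t) := by
  intro H
  have hγd : ∀ s ∈ I, DifferentiableAt ℝ γ s := fun s hs =>
    (hγ.differentiableOn two_ne_zero).differentiableAt (hIopen.mem_nhds hs)
  have hwd : ∀ s ∈ I, DifferentiableAt ℝ w s := fun s hs =>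
    (hw.differentiableOn two_ne_zero).differentiableAt (hIopen.mem_nhds hs)
  have hww' : ∀ s ∈ I, mink (w s) (deriv w s) = 0 := fun s hs =>
    mink_deriv_eq_zero_of_null hIopen hs (hwd s hs) hw0
  obtain ⟨t₀, ht₀⟩ := hJne
  have hJ : J.Nontrivial := (infinite_of_mem_nhds t₀ (hJopen.mem_nhds ht₀)).nontrivial
  have hsol : ∀ s ∈ I, mink (deriv γ s) (w s) * det3 (deriv w s) (w s) v = 0 ∧
      2 * det3 (deriv γ s) (w s) (deriv w s) = mink (deriv γ s) (w s) * det3 (deriv γ s) (w s) v :=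
    fun s hs => hJ.eq_zero_of_forall_eq_add_mul fun t ht =>
      (solitonEqAt_ruledSurface_iff (hγd s hs) (hwd s hs) (hw0 s hs) (hww' s hs) (hγw s hs) v t).1
        (H s hs t ht)
  have hwv : ∀ s ∈ I, mink (w s) v = 0 := fun s hs => by
    have hC := (mul_eq_zero.1 (hsol s hs).1).resolve_left (hγw s hs)
    rw [← neg_eq_zero, ← det3_swap13] at hC
    rw [mink_comm]
    exact mink_eq_zero_of_det3_eq_zero (hw0 s hs) (hww' s hs) (hw1 s hs) hC
  obtain ⟨s, hs⟩ := hIne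
  exact two_mul_det3_ne_mink_mul_det3 (hw0 s hs) (hww' s hs) (hw1 s hs) (hγw s hs) (hγw' s hs)
    (mink_deriv_eq_zero_of_orthogonal hIopen hs (hwd s hs) hwv) (hsol s hs).2

/-- Theorem 2, normalized form: a non-cylindrical ruled surface with
lightlike rulings, normalized so that `⟨w,w⟩ = 0`, `⟨w',w'⟩ = 1`, `⟨γ',w⟩ ≠ 0`,
`⟨γ',w'⟩ = 0` on a nonempty open interval `I`, is never a translating soliton:
for every `v` and every nonempty open interval `J`, the translating soliton equation
fails at some point of `I × J`. -/
theorem stmt10 (I : Set ℝ) (hIopen : IsOpen I) (hIconn : I.OrdConnected)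
    (hIne : I.Nonempty)
    (γ w : ℝ → Fin 3 → ℝ)
    (hγ : ContDiffOn ℝ 2 γ I) (hw : ContDiffOn ℝ 2 w I)
    (hw0 : ∀ s ∈ I, mink (w s) (w s) = 0)
    (hw1 : ∀ s ∈ I, mink (deriv w s) (deriv w s) = 1)
    (hγw : ∀ s ∈ I, mink (deriv γ s) (w s) ≠ 0)
    (hγw' : ∀ s ∈ I, mink (deriv γ s) (deriv w s) = 0)
    (v : Fin 3 → ℝ)
    (J : Set ℝ) (hJopen : IsOpen J) (hJconn : J.OrdConnected) (hJne : J.Nonempty) :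
    ¬ (∀ s ∈ I, ∀ t ∈ J, SolitonEqAt (fun s t => γ s + t • w s) v s t) :=
  stmt10_general I hIopen hIne γ w hγ hw hw0 hw1 hγw hγw' v J hJopen hJne
end
end

section
/- (Theorem 4, case v = (0,1,1), ε = 1: explicit non-cylindrical ruled translating soliton.) Fix a, b ∈ ℝ and define, for s with 2s + a > 0: Φ(s) = (1/2)·log(2s + a), x(s) = (a/4)·log(2s + a) − s/2, z(s) = −((a² + 4)/16)·log(2s + a) + b·s − s²/8, and γ(s) = (x(s), z(s) + Φ(s), z(s)). Then X(s,t) = γ(s) + t·(1, s, s) satisfies ⟨γ'(s), (1,s,s)⟩ = 0, and at every point (s,t) with 2s + a > 0 and ⟨X_s, X_s⟩ < 0, X is non-degenerate with EG − F² = ⟨X_s,X_s⟩ < 0 and satisfies the translating soliton equation with respect to v = (0, 1, 1). -/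
noncomputable section

/-! For a ruled surface `X = γ + t w` with `w(s) = (1,s,s)` one has `⟨w,w⟩ = 1`, and
`w' = (0,1,1)` is null and orthogonal to `w`; hence `G = 1`, `X_tt = 0` and `F = ⟨γ',w⟩`.
Writing `γ = (x, z+Φ, z)`, the condition `F = 0` reads `x' = -sΦ'`, and then the soliton
equation `det(X_s,w,γ'') = E·det(X_s,w,w')` is affine in `t`; its two coefficients are the
ODEs `Φ'' = -2Φ'²` and `z'' = x'² + Φ'² + s x'' + 2s x'Φ'`. The given `x, Φ, z` solve them. -/

open Filter Topology

lemma hasDerivAt_vec3 {f g h : ℝ → ℝ} {f' g' h' y : ℝ} (hf : HasDerivAt f f' y)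
    (hg : HasDerivAt g g' y) (hh : HasDerivAt h h' y) :
    HasDerivAt (fun y => ![f y, g y, h y]) ![f', g', h'] y :=
  hf.finCons <| hg.finCons <| hh.finCons <|
    (hasDerivAt_const y ![]).congr_deriv (Subsingleton.elim _ _)

section RuledSurface

variable (γ w : ℝ → Fin 3 → ℝ) {s t : ℝ}

lemma pT_ruled (s t : ℝ) : pT (fun s t => γ s + t • w s) s t = w s :=
  (((hasDerivAt_id' t).smul_const (w s)).const_add (γ s)).deriv.trans (one_smul ℝ (w s))

lemma pTT_ruled (s t : ℝ) : pTT (fun s t => γ s + t • w s) s t = 0 := by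
  simp only [pTT, pT_ruled, deriv_const]

variable {γ w}

lemma pS_ruled {γ' w' : Fin 3 → ℝ} (hγ : HasDerivAt γ γ' s) (hw : HasDerivAt w w' s) :
    pS (fun s t => γ s + t • w s) s t = γ' + t • w' :=
  (hγ.add (hw.const_smul t)).deriv

lemma pSS_ruled {γ' w' : ℝ → Fin 3 → ℝ} {γ'' w'' : Fin 3 → ℝ}
    (hγ : ∀ᶠ y in 𝓝 s, HasDerivAt γ (γ' y) y) (hw : ∀ᶠ y in 𝓝 s, HasDerivAt w (w' y) y)
    (hγ' : HasDerivAt γ' γ'' s) (hw' : HasDerivAt w' w'' s) :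
    pSS (fun s t => γ s + t • w s) s t = γ'' + t • w'' := by
  have hS : (fun y => pS (fun s t => γ s + t • w s) y t) =ᶠ[𝓝 s] fun y => γ' y + t • w' y :=
    (hγ.and hw).mono fun y h => pS_ruled h.1 h.2
  rw [pSS, hS.deriv_eq]
  exact (hγ'.add (hw'.const_smul t)).deriv

end RuledSurface

lemma disc_eq_coefE {X : ℝ → ℝ → Fin 3 → ℝ} {s t : ℝ} (hF : coefF X s t = 0)
    (hG : coefG X s t = 1) : disc X s t = coefE X s t := by
  simp [disc, hF, hG]

lemma solitonEqAt_of_coefF_eq_zero {X : ℝ → ℝ → Fin 3 → ℝ} {v : Fin 3 → ℝ} {s t : ℝ}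
    (hF : coefF X s t = 0) (hG : coefG X s t = 1) (hTT : pTT X s t = 0) (hE : coefE X s t < 0)
    (h : det3 (pS X s t) (pT X s t) (pSS X s t) = coefE X s t * det3 (pS X s t) (pT X s t) v) :
    SolitonEqAt X v s t := by
  rw [SolitonEqAt, disc_eq_coefE hF hG, abs_of_neg hE, hF, hG, hTT, h]
  simp [det3]

section Ruling

lemma add_smul_ruling (p q r t : ℝ) :
    ![p, r + q, r] + t • ![0, 1, 1] = ![p, (r + t) + q, r + t] := by
  ext i
  fin_cases i <;> simp [add_right_comm]

lemma mink_ruling (p q r s : ℝ) : mink ![p, r + q, r] ![1, s, s] = p + s * q := by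
  simp only [mink, Matrix.cons_val_zero, Matrix.cons_val_one, Matrix.cons_val_two,
    Matrix.head_cons, Matrix.tail_cons]
  ring

lemma det3_ruling {p q r p' q' r' s : ℝ} (hp : p = -s * q) (hq' : q' = -2 * q ^ 2)
    (hr' : r' = p ^ 2 + q ^ 2 + s * p' + 2 * s * p * q) :
    det3 ![p, r + q, r] ![1, s, s] ![p', r' + q', r']
      = mink ![p, r + q, r] ![p, r + q, r] * det3 ![p, r + q, r] ![1, s, s] ![0, 1, 1] := by
  subst hp hq' hr'
  simp only [det3, mink, Matrix.cons_val_zero, Matrix.cons_val_one, Matrix.cons_val_two,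
    Matrix.head_cons, Matrix.tail_cons]
  ring

variable {x Φ z : ℝ → ℝ} {s t : ℝ}

lemma hasDerivAt_curve {p q r : ℝ} (hx : HasDerivAt x p s) (hΦ : HasDerivAt Φ q s)
    (hz : HasDerivAt z r s) :
    HasDerivAt (fun y => ![x y, z y + Φ y, z y]) ![p, r + q, r] s :=
  hasDerivAt_vec3 hx (hz.add hΦ) hz

lemma mink_deriv_ruling {p q r : ℝ} (hx : HasDerivAt x p s) (hΦ : HasDerivAt Φ q s)
    (hz : HasDerivAt z r s) (horth : p = -s * q) :
    mink (deriv (fun y => ![x y, z y + Φ y, z y]) s) ![1, s, s] = 0 := by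
  rw [(hasDerivAt_curve hx hΦ hz).deriv, mink_ruling, horth]
  ring

theorem solitonEqAt_ruling_of_ode {p q r : ℝ → ℝ} {p' q' r' : ℝ}
    (hx : ∀ᶠ y in 𝓝 s, HasDerivAt x (p y) y) (hΦ : ∀ᶠ y in 𝓝 s, HasDerivAt Φ (q y) y)
    (hz : ∀ᶠ y in 𝓝 s, HasDerivAt z (r y) y)
    (hp : HasDerivAt p p' s) (hq : HasDerivAt q q' s) (hr : HasDerivAt r r' s)
    (horth : p s = -s * q s) (hq' : q' = -2 * q s ^ 2)
    (hr' : r' = p s ^ 2 + q s ^ 2 + s * p' + 2 * s * p s * q s)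
    (hE : coefE (fun s t => ![x s, z s + Φ s, z s] + t • ![1, s, s]) s t < 0) :
    disc (fun s t => ![x s, z s + Φ s, z s] + t • ![1, s, s]) s t
        = coefE (fun s t => ![x s, z s + Φ s, z s] + t • ![1, s, s]) s t ∧
      SolitonEqAt (fun s t => ![x s, z s + Φ s, z s] + t • ![1, s, s]) ![0, 1, 1] s t := by
  have hγ : ∀ᶠ y in 𝓝 s,
      HasDerivAt (fun y => ![x y, z y + Φ y, z y]) ![p y, r y + q y, r y] y :=
    (hx.and (hΦ.and hz)).mono fun y ⟨hx, hΦ, hz⟩ => hasDerivAt_curve hx hΦ hz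
  have hw (y : ℝ) : HasDerivAt (fun y : ℝ => ![1, y, y]) ![0, 1, 1] y :=
    hasDerivAt_vec3 (hasDerivAt_const y 1) (hasDerivAt_id' y) (hasDerivAt_id' y)
  have hS := pS_ruled (t := t) hγ.self_of_nhds (hw s)
  rw [add_smul_ruling] at hS
  have hSS := pSS_ruled (t := t) hγ (.of_forall hw) (hasDerivAt_curve hp hq hr)
    (hasDerivAt_const s ![(0 : ℝ), 1, 1])
  rw [smul_zero, add_zero] at hSS
  have hF : coefF (fun s t => ![x s, z s + Φ s, z s] + t • ![1, s, s]) s t = 0 := by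
    rw [coefF, hS, pT_ruled, mink_ruling, horth]
    ring
  have hG : coefG (fun s t => ![x s, z s + Φ s, z s] + t • ![1, s, s]) s t = 1 := by
    rw [coefG, pT_ruled]
    simp [mink]
  refine ⟨disc_eq_coefE hF hG, solitonEqAt_of_coefF_eq_zero hF hG (pTT_ruled _ _ s t) hE ?_⟩
  rw [coefE, hS, hSS, pT_ruled]
  exact det3_ruling horth hq' hr'

end Ruling

section LogQuad

variable (a α β δ : ℝ) {y : ℝ}

def logQuad (y : ℝ) : ℝ := α * Real.log (2 * y + a) + β * y + δ * y ^ 2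

def logQuadDeriv (y : ℝ) : ℝ := 2 * α / (2 * y + a) + β + 2 * δ * y

lemma hasDerivAt_two_mul_add (y : ℝ) : HasDerivAt (fun y => 2 * y + a) 2 y := by
  simpa using ((hasDerivAt_id' y).const_mul 2).add_const a

variable {a}

lemma hasDerivAt_logQuad (hy : 2 * y + a ≠ 0) :
    HasDerivAt (logQuad a α β δ) (logQuadDeriv a α β δ y) y := by
  refine ((((Real.hasDerivAt_log hy).comp y (hasDerivAt_two_mul_add a y)).const_mul α).add
    ((hasDerivAt_id' y).const_mul β)).add ((hasDerivAt_pow 2 y).const_mul δ) |>.congr_deriv ?_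
  rw [logQuadDeriv]
  field_simp
  ring

lemma hasDerivAt_logQuadDeriv (hy : 2 * y + a ≠ 0) :
    HasDerivAt (logQuadDeriv a α β δ) (-4 * α / (2 * y + a) ^ 2 + 2 * δ) y := by
  refine ((((hasDerivAt_two_mul_add a y).inv hy).const_mul (2 * α)).add_const β).add
    ((hasDerivAt_id' y).const_mul (2 * δ)) |>.congr_deriv ?_
  ring

end LogQuad

/-- Theorem 4, case `v = (0,1,1)`, `ε = 1`: with
`Φ(s) = (1/2)log(2s+a)`, `x(s) = (a/4)log(2s+a) − s/2`,
`z(s) = −((a²+4)/16)log(2s+a) + bs − s²/8` and `γ = (x, z+Φ, z)`, the ruled surface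
`X(s,t) = γ(s) + t(1,s,s)` satisfies `⟨γ',(1,s,s)⟩ = 0`, and at every `(s,t)` with
`2s+a > 0` and `E = ⟨X_s,X_s⟩ < 0` it is non-degenerate with `EG − F² = E < 0` and
satisfies the translating soliton equation with respect to `v = (0,1,1)`. -/
theorem stmt15 (a b : ℝ) (Φ x z : ℝ → ℝ) (γ : ℝ → Fin 3 → ℝ)
    (hΦ : Φ = fun s => (1 / 2) * Real.log (2 * s + a))
    (hx : x = fun s => (a / 4) * Real.log (2 * s + a) - s / 2)
    (hz : z = fun s =>
      -((a ^ 2 + 4) / 16) * Real.log (2 * s + a) + b * s - s ^ 2 / 8)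
    (hγ : γ = fun s => ![x s, z s + Φ s, z s]) :
    (∀ s : ℝ, 0 < 2 * s + a → mink (deriv γ s) ![1, s, s] = 0) ∧
    (∀ s t : ℝ, 0 < 2 * s + a →
      coefE (fun s t => γ s + t • ![1, s, s]) s t < 0 →
        disc (fun s t => γ s + t • ![1, s, s]) s t
            = coefE (fun s t => γ s + t • ![1, s, s]) s t ∧
        disc (fun s t => γ s + t • ![1, s, s]) s t < 0 ∧
        SolitonEqAt (fun s t => γ s + t • ![1, s, s]) ![0, 1, 1] s t) := by
  obtain rfl : Φ = logQuad a (1 / 2) 0 0 := by subst hΦ; ext y; rw [logQuad]; ring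
  obtain rfl : x = logQuad a (a / 4) (-1 / 2) 0 := by subst hx; ext y; rw [logQuad]; ring
  obtain rfl : z = logQuad a (-((a ^ 2 + 4) / 16)) b (-1 / 8) := by
    subst hz; ext y; rw [logQuad]; ring
  subst hγ
  have horth {s : ℝ} (hs : 2 * s + a ≠ 0) :
      logQuadDeriv a (a / 4) (-1 / 2) 0 s = -s * logQuadDeriv a (1 / 2) 0 0 s := by
    rw [logQuadDeriv, logQuadDeriv]
    field_simp
    ring
  refine ⟨fun s hs => mink_deriv_ruling (hasDerivAt_logQuad _ _ _ hs.ne')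
    (hasDerivAt_logQuad _ _ _ hs.ne') (hasDerivAt_logQuad _ _ _ hs.ne') (horth hs.ne'),
    fun s t hs hE => ?_⟩
  have hnear : ∀ᶠ y in 𝓝 s, 2 * y + a ≠ 0 :=
    (by fun_prop : Continuous fun y : ℝ => 2 * y + a).continuousAt.eventually_ne hs.ne'
  obtain ⟨hdisc, hsol⟩ := solitonEqAt_ruling_of_ode
    (hnear.mono fun y hy => hasDerivAt_logQuad _ _ _ hy)
    (hnear.mono fun y hy => hasDerivAt_logQuad _ _ _ hy)
    (hnear.mono fun y hy => hasDerivAt_logQuad _ _ _ hy)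
    (hasDerivAt_logQuadDeriv _ _ _ hs.ne') (hasDerivAt_logQuadDeriv _ _ _ hs.ne')
    (hasDerivAt_logQuadDeriv _ _ _ hs.ne') (horth hs.ne')
    (by rw [logQuadDeriv]; field_simp; ring) (by simp only [logQuadDeriv]; field_simp; ring) hE
  exact ⟨hdisc, hdisc ▸ hE, hsol⟩
end
end
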